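/- Let h, g, σ, p > 0 with h < g and suppose p is large enough that α* = 1/2 + ((g−h)σ²)/(2ghp) ∈ (0,1). Then the secrecy rate at α*, namely log₂(1 + (1−α*)·h·p/σ²) − log₂(1 + (1−α*)·g·p/(α*·g·p + σ²)), is strictly positive. -/

import Mathlib

/-!
Clearing denominators, the eavesdropper's SINR `(1 - a) g p / (a g p + σ²)` lies below the legitimate
SNR `(1 - a) h p / σ²` exactly when `(g - h) σ² < a g h p`, i.e. when `p` exceeds the zero-secrecy
threshold `X(a) = σ² / a · (1/h - 1/g)`. At the optimal splitting ratio `a*` one has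
`2 a* g h p = g h p + (g - h) σ²`, and `a* < 1` says `(g - h) σ² < g h p`; averaging the two gives
`(g - h) σ² < a* g h p`.
-/

open Real

noncomputable section

/-- Legitimate rate minus best-eavesdropper rate when a fraction `a` of the power `p` goes to
artificial noise, which the legitimate receiver cancels. -/
def secrecyRate (h g σ p a : ℝ) : ℝ :=
  logb 2 (1 + (1 - a) * h * p / σ ^ 2) - logb 2 (1 + (1 - a) * g * p / (a * g * p + σ ^ 2))

def optimalSplit (h g σ p : ℝ) : ℝ :=
  1 / 2 + ((g - h) * σ ^ 2) / (2 * g * h * p)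

end

section

variable {h g σ p a : ℝ}

theorem secrecyRate_pos (hh : 0 < h) (hg : 0 < g) (hσ : σ ≠ 0) (hp : 0 < p) (ha : a < 1)
    (hthreshold : (g - h) * σ ^ 2 < a * (g * h * p)) : 0 < secrecyRate h g σ p a := by
  have hσ2 : 0 < σ ^ 2 := by positivity
  have hsinr : g * σ ^ 2 < h * (a * g * p + σ ^ 2) := by linear_combination hthreshold
  have hD : 0 < a * g * p + σ ^ 2 :=
    pos_of_mul_pos_right ((by positivity : 0 < g * σ ^ 2).trans hsinr) hh.le
  have hpow : 0 < (1 - a) * p := mul_pos (sub_pos.2 ha) hp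
  have heve_lt : (1 - a) * g * p / (a * g * p + σ ^ 2) < (1 - a) * h * p / σ ^ 2 := by
    rw [div_lt_div_iff₀ hD hσ2]
    linear_combination mul_lt_mul_of_pos_left hsinr hpow
  have heve_nonneg : 0 ≤ (1 - a) * g * p / (a * g * p + σ ^ 2) := by
    rw [mul_right_comm]
    exact div_nonneg (mul_nonneg hpow.le hg.le) hD.le
  exact sub_pos.2 <| logb_lt_logb one_lt_two (by positivity) (add_lt_add_right heve_lt 1)

theorem optimalSplit_mul (hh : h ≠ 0) (hg : g ≠ 0) (hp : p ≠ 0) :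
    optimalSplit h g σ p * (g * h * p) = (g * h * p + (g - h) * σ ^ 2) / 2 := by
  unfold optimalSplit
  field_simp

theorem sub_mul_sq_lt_optimalSplit_mul (hh : 0 < h) (hg : 0 < g) (hp : 0 < p)
    (ha : optimalSplit h g σ p < 1) :
    (g - h) * σ ^ 2 < optimalSplit h g σ p * (g * h * p) := by
  have hghp : 0 < g * h * p := by positivity
  have hlt := mul_lt_mul_of_pos_right ha hghp
  rw [optimalSplit_mul hh.ne' hg.ne' hp.ne', one_mul] at hlt
  rw [optimalSplit_mul hh.ne' hg.ne' hp.ne']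
  linarith

end

theorem stmt_13_general (h g σ p : ℝ) (hh : 0 < h) (hg : 0 < g) (hσ : 0 < σ) (hp : 0 < p)
    (a : ℝ) (ha : a = 1 / 2 + ((g - h) * σ^2) / (2 * g * h * p))
    (ha1 : a < 1) :
    0 < Real.logb 2 (1 + (1 - a) * h * p / σ^2)
        - Real.logb 2 (1 + (1 - a) * g * p / (a * g * p + σ^2)) := by
  change a = optimalSplit h g σ p at ha
  subst ha
  exact secrecyRate_pos hh hg hσ.ne' hp ha1 (sub_mul_sq_lt_optimalSplit_mul hh hg hp ha1)

theorem stmt_13 (h g σ p : ℝ) (hh : 0 < h) (hg : 0 < g) (hσ : 0 < σ) (hp : 0 < p)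
    (hlt : h < g)
    (a : ℝ) (ha : a = 1 / 2 + ((g - h) * σ^2) / (2 * g * h * p))
    (ha0 : 0 < a) (ha1 : a < 1) :
    0 < Real.logb 2 (1 + (1 - a) * h * p / σ^2)
        - Real.logb 2 (1 + (1 - a) * g * p / (a * g * p + σ^2)) :=
  stmt_13_general h g σ p hh hg hσ hp a ha ha1
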